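/- For every natural number n≥8, the star K_{1,n} is not a 50% max-tolerance graph. -/

import Mathlib

variable {V : Type*}

/-- A max-tolerance representation: each vertex `u` gets an interval `[a u, b u]` and a
positive tolerance `t u`, and distinct `u, v` are adjacent iff the length of
`[a u, b u] ∩ [a v, b v]` (zero if empty) is at least `max (t u) (t v)`. -/
def IsMaxTolRep (G : SimpleGraph V) (a b t : V → ℝ) : Prop :=
  (∀ u, a u ≤ b u) ∧ (∀ u, 0 < t u) ∧
    ∀ u v : V, u ≠ v →
      (G.Adj u v ↔ max (t u) (t v) ≤ max (min (b u) (b v) - max (a u) (a v)) 0)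

/-- A 50% max-tolerance graph: a max-tolerance representation in which each tolerance is
half the length of the corresponding interval. -/
def IsHalfMaxTolG (G : SimpleGraph V) : Prop :=
  ∃ a b : V → ℝ, IsMaxTolRep G a b (fun u => (b u - a u) / 2)

/-- The star `K_{1,n}`: the center is `none`, the `n` leaves are `some i`, and the
edges are exactly those joining the center to each leaf. -/
def starGraph (n : ℕ) : SimpleGraph (Option (Fin n)) where
  Adj x y := x ≠ y ∧ (x = none ∨ y = none)
  symm := ⟨fun x y h => ⟨h.1.symm, h.2.symm⟩⟩
  loopless := ⟨fun x h => h.1 rfl⟩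

/-!
Put the origin at the midpoint `M` of the center's interval, so that the center is
`[M - T, M + T]` and each leaf is `[M - p, M + q]`; two such intervals meet in length
`min p p' + min q q'`. Classify the leaves by which ends of the center they reach past.
Two leaves reaching past both ends are adjacent. Among leaves reaching past the left end only,
of two non-adjacent ones the one with larger `q` is more than twice as long as the other,
while all their lengths lie in `[T, 4T)`; so at most two of them are pairwise non-adjacent,
and symmetrically on the right. Of two non-adjacent leaves inside the center, the one starting
further left is longer on the right of `M` and the other one on the left, which three leaves
cannot all satisfy pairwise. So the star has at most `1 + 2 + 2 + 2 = 7` leaves.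
-/

open Finset

/-- Non-adjacency of the intervals `[-p, q]` and `[-p', q']` with tolerances half their
lengths. -/
def Apart (p q p' q' : ℝ) : Prop :=
  min p p' + min q q' < max ((p + q) / 2) ((p' + q') / 2)

lemma IsMaxTolRep.adj_iff_not_apart {G : SimpleGraph V} {a b : V → ℝ}
    (h : IsMaxTolRep G a b fun u => (b u - a u) / 2) (M : ℝ) {u v : V} (huv : u ≠ v) :
    G.Adj u v ↔ ¬Apart (M - a u) (b u - M) (M - a v) (b v - M) := by
  have htol : 0 < max ((b u - a u) / 2) ((b v - a v) / 2) := lt_max_of_lt_left (h.2.1 u)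
  rw [h.2.2 u v huv, Apart, not_lt, le_max_iff, or_iff_left htol.not_ge, min_sub_sub_left,
    min_sub_sub_right]
  ring_nf

section Apart

variable {T p q p' q' : ℝ}

lemma Apart.swap (h : Apart p q p' q') : Apart q p q' p' := by
  unfold Apart at *
  rwa [add_comm (min q q'), add_comm q, add_comm q']

lemma nonneg_of_not_apart_center (h : ¬Apart T T p q) : 0 ≤ p ∧ 0 ≤ q := by
  rw [Apart, not_lt] at h
  have hT := (le_max_left _ _).trans h
  exact ⟨(le_min_iff.mp (by linarith [min_le_left T q])).2,
    (le_min_iff.mp (by linarith [min_le_left T p])).2⟩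

lemma not_apart_of_covers_center (hp : T ≤ p) (hq : T ≤ q) (hp' : T ≤ p') (hq' : T ≤ q')
    (hc : ¬Apart T T p q) (hc' : ¬Apart T T p' q') : ¬Apart p q p' q' := by
  rw [Apart, not_lt, min_eq_left hp, min_eq_left hq] at hc
  rw [Apart, not_lt, min_eq_left hp', min_eq_left hq'] at hc'
  have := (le_max_right _ _).trans hc
  have := (le_max_right _ _).trans hc'
  rw [Apart, not_lt]
  exact max_le (by linarith [le_min hp hp', le_min hq hq'])
    (by linarith [le_min hp hp', le_min hq hq'])

lemma two_mul_length_lt_of_apart (hp : T ≤ p) (hp' : T ≤ p') (hq : 0 ≤ q) (hqq' : q ≤ q')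
    (hq' : q' < T) (hc : ¬Apart T T p q) (h : Apart p q p' q') : 2 * (p + q) < p' + q' := by
  rw [Apart, not_lt, min_eq_left hp, min_eq_right (hqq'.trans_lt hq').le] at hc
  rw [Apart, min_eq_left hqq'] at h
  have := (le_max_right _ _).trans hc
  rcases lt_max_iff.mp h with h | h
  · linarith [min_le_left p p', le_min hp hp']
  · rcases le_total p p' with hpp' | hpp'
    · rw [min_eq_left hpp'] at h
      linarith
    · rw [min_eq_right hpp'] at h
      linarith

lemma lt_and_lt_of_apart_inside_center (hp : p < T) (hq : q < T) (hp' : p' < T) (hq' : q' < T)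
    (hc : ¬Apart T T p q) (hc' : ¬Apart T T p' q') (hpp' : p ≤ p') (h : Apart p q p' q') :
    p < q ∧ q' < p' := by
  obtain ⟨hp0, hq0⟩ := nonneg_of_not_apart_center hc
  obtain ⟨hp0', hq0'⟩ := nonneg_of_not_apart_center hc'
  rw [Apart, not_lt, min_eq_right hp.le, min_eq_right hq.le] at hc
  rw [Apart, not_lt, min_eq_right hp'.le, min_eq_right hq'.le] at hc'
  have := (le_max_left _ _).trans hc
  have := (le_max_left _ _).trans hc'
  rw [Apart, min_eq_left hpp'] at h
  rcases le_total q q' with hqq' | hqq'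
  · rw [min_eq_left hqq'] at h
    rcases lt_max_iff.mp h with h | h <;> linarith
  · rw [min_eq_right hqq'] at h
    rcases lt_max_iff.mp h with h | h <;> constructor <;> linarith

end Apart

section Leaves

variable {ι : Type*} {T : ℝ} {p q : ι → ℝ} (hc : ∀ i, ¬Apart T T (p i) (q i))
  (hpw : Pairwise fun i j => Apart (p i) (q i) (p j) (q j))
include hc hpw

lemma card_le_one_of_covers_center {s : Finset ι} (hs : ∀ i ∈ s, T ≤ p i ∧ T ≤ q i) :
    #s ≤ 1 := by
  refine card_le_one.mpr fun i hi j hj => ?_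
  by_contra hij
  exact not_apart_of_covers_center (hs i hi).1 (hs i hi).2 (hs j hj).1 (hs j hj).2 (hc i) (hc j)
    (hpw hij)

lemma card_le_two_of_overhangs_left {s : Finset ι} (hs : ∀ i ∈ s, T ≤ p i ∧ q i < T) :
    #s ≤ 2 := by
  have hlen : ∀ i ∈ s, T ≤ p i + q i ∧ p i + q i < 4 * T := by
    intro i hi
    have hci := hc i
    rw [Apart, not_lt, min_eq_left (hs i hi).1, min_eq_right (hs i hi).2.le] at hci
    have := (le_max_right _ _).trans hci
    constructor <;> linarith [(nonneg_of_not_apart_center (hc i)).2, (hs i hi).1, (hs i hi).2]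
  have hdouble : ∀ i ∈ s, ∀ j ∈ s, i ≠ j →
      2 * (p i + q i) < p j + q j ∨ 2 * (p j + q j) < p i + q i := by
    intro i hi j hj hij
    rcases le_total (q i) (q j) with hq | hq
    · exact .inl <| two_mul_length_lt_of_apart (hs i hi).1 (hs j hj).1
        (nonneg_of_not_apart_center (hc i)).2 hq (hs j hj).2 (hc i) (hpw hij)
    · exact .inr <| two_mul_length_lt_of_apart (hs j hj).1 (hs i hi).1
        (nonneg_of_not_apart_center (hc j)).2 hq (hs i hi).2 (hc j) (hpw hij.symm)
  by_contra! h
  obtain ⟨i, hi, j, hj, k, hk, hij, hik, hjk⟩ := two_lt_card.mp h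
  have := hlen i hi
  have := hlen j hj
  have := hlen k hk
  rcases hdouble i hi j hj hij with _ | _ <;> rcases hdouble i hi k hk hik with _ | _ <;>
    rcases hdouble j hj k hk hjk with _ | _ <;> linarith

lemma card_le_two_of_inside_center {s : Finset ι} (hs : ∀ i ∈ s, p i < T ∧ q i < T) :
    #s ≤ 2 := by
  have hflip : ∀ i ∈ s, ∀ j ∈ s, i ≠ j → (p i < q i ↔ ¬p j < q j) := by
    intro i hi j hj hij
    rcases le_total (p i) (p j) with hpp | hpp
    · obtain ⟨h, h'⟩ := lt_and_lt_of_apart_inside_center (hs i hi).1 (hs i hi).2 (hs j hj).1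
        (hs j hj).2 (hc i) (hc j) hpp (hpw hij)
      exact iff_of_true h (not_lt.mpr h'.le)
    · obtain ⟨h, h'⟩ := lt_and_lt_of_apart_inside_center (hs j hj).1 (hs j hj).2 (hs i hi).1
        (hs i hi).2 (hc j) (hc i) hpp (hpw hij.symm)
      exact iff_of_false (not_lt.mpr h'.le) (not_not.mpr h)
  by_contra! h
  obtain ⟨i, hi, j, hj, k, hk, hij, hik, hjk⟩ := two_lt_card.mp h
  have := hflip i hi j hj hij
  have := hflip i hi k hk hik
  have := hflip j hj k hk hjk
  tauto

theorem card_le_seven [Fintype ι] : Fintype.card ι ≤ 7 := by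
  classical
  have hc' : ∀ i, ¬Apart T T (q i) (p i) := fun i h => hc i h.swap
  have hpw' : Pairwise fun i j => Apart (q i) (p i) (q j) (p j) := fun i j hij => (hpw hij).swap
  rw [← card_univ, ← card_filter_add_card_filter_not (s := univ) (T ≤ p ·),
    ← card_filter_add_card_filter_not (s := univ.filter (T ≤ p ·)) (T ≤ q ·),
    ← card_filter_add_card_filter_not (s := univ.filter (¬T ≤ p ·)) (T ≤ q ·)]
  have h₁ := card_le_one_of_covers_center hc hpw (s := (univ.filter (T ≤ p ·)).filter (T ≤ q ·))
    (by simp +contextual)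
  have h₂ := card_le_two_of_overhangs_left hc hpw
    (s := (univ.filter (T ≤ p ·)).filter (¬T ≤ q ·)) (by simp +contextual)
  have h₃ := card_le_two_of_overhangs_left hc' hpw'
    (s := (univ.filter (¬T ≤ p ·)).filter (T ≤ q ·)) (by simp +contextual)
  have h₄ := card_le_two_of_inside_center hc hpw
    (s := (univ.filter (¬T ≤ p ·)).filter (¬T ≤ q ·)) (by simp +contextual)
  omega

end Leaves

/-- For every `n ≥ 8`, the star `K_{1,n}` is not a 50% max-tolerance graph. -/
theorem star_not_half_maxtol (n : ℕ) (hn : 8 ≤ n) : ¬ IsHalfMaxTolG (starGraph n) := by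
  rintro ⟨a, b, hrep⟩
  set M := (a none + b none) / 2
  set T := (b none - a none) / 2
  have hcenter : ∀ i : Fin n, ¬Apart T T (M - a (some i)) (b (some i) - M) := by
    intro i
    have hadj : (starGraph n).Adj none (some i) := ⟨nofun, .inl rfl⟩
    have := (hrep.adj_iff_not_apart M hadj.ne).mp hadj
    rwa [show M - a none = T by ring, show b none - M = T by ring] at this
  have hleaves : Pairwise fun i j : Fin n => Apart (M - a (some i)) (b (some i) - M)
      (M - a (some j)) (b (some j) - M) := by
    intro i j hij
    by_contra h
    obtain ⟨-, h | h⟩ := (hrep.adj_iff_not_apart M (Option.some_injective _ |>.ne hij)).mpr h <;>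
      cases h
  have := card_le_seven hcenter hleaves
  rw [Fintype.card_fin] at this
  omega
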